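/- arXiv:1701.01173 — 4 statements merged into one kernel-verified Lean document; each statement's English description precedes it below -/
import Mathlib

section
/- Let m ≥ 1 and let d : ℕ → Fin m be any sequence. Then there exist m' ≥ 1 and an admissible sequence d' : ℕ → Fin m' such that for all n ≥ 1, the number of distinct predecessor sets of words of length n in X_{d'} equals Φ_n(d) + 1: |P_{X_{d'}}(n)| = Φ_n(d) + 1. -/
namespace BetaShift

variable {A : Type*}

/-- The shift map: `(shift x) n = x (n+1)`. -/
def shift (x : ℕ → A) : ℕ → A := fun n => x (n + 1)

/-- Lexicographic order on one-sided sequences: `x = y`, or there is an index `i`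
such that `x j = y j` for all `j < i` and `x i < y i`. -/
def SeqLe [LinearOrder A] (x y : ℕ → A) : Prop :=
  x = y ∨ ∃ i, (∀ j, j < i → x j = y j) ∧ x i < y i

/-- A word `w` occurs in the sequence `x`. -/
def Occurs (w : List A) (x : ℕ → A) : Prop :=
  ∃ i : ℕ, ∀ j : Fin w.length, x (i + j) = w.get j

/-- `Complexity x n` is the number `Φ_n(x)` of distinct words of length `n` occurring in `x`. -/
noncomputable def Complexity (x : ℕ → A) (n : ℕ) : ℕ :=
  Set.ncard {w : List A | w.length = n ∧ Occurs w x}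

/-- A sequence is eventually periodic if there are `p ≥ 1` and `N` with
`d (i + p) = d i` for all `i ≥ N`. -/
def EventuallyPeriodic (d : ℕ → A) : Prop :=
  ∃ p, 1 ≤ p ∧ ∃ N, ∀ i, N ≤ i → d (i + p) = d i

/-- `(d)_k`, the `k`-letter prefix of the sequence `d`, as a word. -/
def prefixWord (d : ℕ → A) (k : ℕ) : List A := List.ofFn (fun i : Fin k => d i)

variable {m : ℕ}

/-- `d` is admissible: every shift of `d` is lexicographically ≤ `d`,
and `d` is not eventually `0`. -/
def Admissible (d : ℕ → Fin m) : Prop :=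
  (∀ i, SeqLe (shift^[i] d) d) ∧ ∀ N, ∃ i, N ≤ i ∧ (d i).val ≠ 0

/-- The one-sided β-shift `X_d` determined by the admissible sequence `d`. -/
def XSet (d : ℕ → Fin m) : Set (ℕ → Fin m) :=
  {x | ∀ i, SeqLe (shift^[i] x) d}

/-- The language of `X_d`: all words occurring in some point of `X_d`. -/
def Lang (d : ℕ → Fin m) : Set (List (Fin m)) :=
  {w | ∃ x ∈ XSet d, Occurs w x}

/-- The follower set of the word `w` in `X_d`. -/
def Fol (d : ℕ → Fin m) (w : List (Fin m)) : Set (List (Fin m)) :=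
  {u | w ++ u ∈ Lang d}

/-- The predecessor set of the word `w` in `X_d`. -/
def Pred (d : ℕ → Fin m) (w : List (Fin m)) : Set (List (Fin m)) :=
  {s | s ++ w ∈ Lang d}

/-- The extender set of the word `w` in `X_d`. -/
def Ext (d : ℕ → Fin m) (w : List (Fin m)) : Set (List (Fin m) × List (Fin m)) :=
  {p | p.1 ++ w ++ p.2 ∈ Lang d}

/-- `|F(n)|`: the number of distinct follower sets of words of length `n` in `X_d`. -/
noncomputable def FolCount (d : ℕ → Fin m) (n : ℕ) : ℕ :=
  Set.ncard {S | ∃ w ∈ Lang d, w.length = n ∧ S = Fol d w}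

/-- `|P(n)|`: the number of distinct predecessor sets of words of length `n` in `X_d`. -/
noncomputable def PredCount (d : ℕ → Fin m) (n : ℕ) : ℕ :=
  Set.ncard {S | ∃ w ∈ Lang d, w.length = n ∧ S = Pred d w}

/-- `|E(n)|`: the number of distinct extender sets of words of length `n` in `X_d`. -/
noncomputable def ExtCount (d : ℕ → Fin m) (n : ℕ) : ℕ :=
  Set.ncard {S | ∃ w ∈ Lang d, w.length = n ∧ S = Ext d w}

/-- The largest `k ≤ n` such that the `k`-letter prefix of `d` is a suffix of `v`
(`k = 0`, the empty prefix, always works). -/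
def classIndex (d : ℕ → Fin m) (n : ℕ) (v : List (Fin m)) : ℕ :=
  Nat.findGreatest (fun k => prefixWord d k <:+ v) n

/-- Lexicographic comparison of (equal-length) words: `u = v`, or at the first
index where they differ, `u` takes the smaller value. -/
def WordLe [LinearOrder A] (u v : List A) : Prop :=
  u = v ∨ ∃ i, ∃ (hu : i < u.length) (hv : i < v.length),
    (∀ j (hju : j < u.length) (hjv : j < v.length), j < i → u.get ⟨j, hju⟩ = v.get ⟨j, hjv⟩) ∧
    u.get ⟨i, hu⟩ < v.get ⟨i, hv⟩

end BetaShift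

open BetaShift

/-!
Let `D = (m+1) (d₀+1) (d₁+1) …` over the alphabet `Fin (m+2)`: a new top digit followed by `d`
with every digit raised by one. The top digit occurs in `D` only at position `0`, so every shift of
`D` is already smaller than `D` at its first letter and `D` is admissible.

For any `d`, a word lies in the language of `X_d` iff each of its suffixes is lexicographically at
most the prefix of `d` of the same length. For `D` this shows that the predecessor set of a word `w`
of length `n` is determined by the set of `t ≥ 1` with `w ≤ D[t, t+n)`. That set is an up-set of
windows, so it is either empty (the class of the prefix `D[0, n)`) or generated by the least window
above `w`; distinct windows give distinct classes. The windows `D[t, t+n)` with `t ≥ 1` are the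
factors of `d` of length `n` with every digit raised, hence `|P(n)| = Φ_n(d) + 1`.
-/

namespace List

variable {α : Type*} [LinearOrder α]

theorem append_lt_append_iff_of_length_eq {u u' v v' : List α} (h : u.length = u'.length) :
    u ++ v < u' ++ v' ↔ u < u' ∨ u = u' ∧ v < v' := by
  induction u generalizing u' with
  | nil => cases u' <;> simp_all
  | cons a u ih =>
    cases u' with
    | nil => simp at h
    | cons a' u' =>
      simp only [cons_append, cons_lt_cons_iff, ih (Nat.succ.inj h), cons.injEq]
      tauto

theorem append_le_append_iff_of_length_eq {u u' v v' : List α} (h : u.length = u'.length) :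
    u ++ v ≤ u' ++ v' ↔ u < u' ∨ u = u' ∧ v ≤ v' := by
  rw [le_iff_lt_or_eq, le_iff_lt_or_eq, append_lt_append_iff_of_length_eq h,
    append_eq_append_iff_of_size_eq_left h]
  tauto

end List

namespace BetaShift

variable {A : Type*}

def window (x : ℕ → A) (t n : ℕ) : List A := List.ofFn fun i : Fin n => x (t + i)

@[simp] lemma length_window (x : ℕ → A) (t n : ℕ) : (window x t n).length = n := by
  simp [window]

@[simp] lemma getElem_window (x : ℕ → A) (t n i : ℕ) (h : i < (window x t n).length) :
    (window x t n)[i] = x (t + i) := by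
  simp [window]

lemma window_add (x : ℕ → A) (t a b : ℕ) :
    window x t (a + b) = window x t a ++ window x (t + a) b := by
  refine List.ext_getElem (by simp) fun i _ _ => ?_
  by_cases hi : i < a
  · simp [List.getElem_append_left, hi]
  · rw [List.getElem_append_right (by simpa using hi)]
    simp [add_assoc, Nat.add_sub_cancel' (not_lt.mp hi)]

lemma drop_window (x : ℕ → A) (t n p : ℕ) :
    (window x t n).drop p = window x (t + p) (n - p) :=
  List.ext_getElem (by simp) fun i _ _ => by simp [add_assoc]

lemma map_window {B : Type*} (f : A → B) (x : ℕ → A) (t n : ℕ) :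
    (window x t n).map f = window (f ∘ x) t n := by
  simp [window, List.map_ofFn, Function.comp_def]

lemma iterate_shift_apply (x : ℕ → A) (s n : ℕ) : (shift^[s] x) n = x (s + n) := by
  induction s generalizing n with
  | zero => simp
  | succ s ih => rw [Function.iterate_succ_apply', shift, ih, add_right_comm, add_assoc]

lemma window_iterate_shift (x : ℕ → A) (s t n : ℕ) :
    window (shift^[s] x) t n = window x (s + t) n := by
  simp [window, iterate_shift_apply, add_assoc]

lemma occurs_iff_exists_window {w : List A} {x : ℕ → A} :
    Occurs w x ↔ ∃ t, window x t w.length = w := by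
  refine exists_congr fun t => ⟨fun h => ?_, fun h j => ?_⟩
  · exact List.ext_getElem (by simp) fun i hi _ => by simpa using h ⟨i, by simpa using hi⟩
  · rw [List.get_eq_getElem, List.getElem_of_eq h.symm, getElem_window]

lemma complexity_eq_ncard_range (x : ℕ → A) (n : ℕ) :
    Complexity x n = (Set.range fun t => window x t n).ncard := by
  unfold Complexity
  congr 1
  ext w
  simp only [Set.mem_ofPred_eq, Set.mem_range, occurs_iff_exists_window]
  constructor
  · rintro ⟨rfl, h⟩
    exact h
  · rintro ⟨t, rfl⟩
    exact ⟨by simp, t, by simp⟩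

section LinearOrder

variable [LinearOrder A]

lemma seqLe_of_le {x y : ℕ → A} (h : x ≤ y) : SeqLe x y :=
  (Pi.toLex_monotone h).eq_or_lt.imp (fun h => toLex.injective h) id

lemma window_le_window_of_seqLe {x y : ℕ → A} (h : SeqLe x y) (n : ℕ) :
    window x 0 n ≤ window y 0 n := by
  obtain rfl | ⟨i, hagree, hlt⟩ := h
  · exact le_rfl
  by_cases hi : i < n
  · refine le_of_lt (List.lt_iff_exists.mpr (Or.inr ⟨i, by simpa, by simpa, ?_, by simpa⟩))
    intro j hj
    simpa using hagree j hj
  · exact (List.ext_getElem (by simp) fun j hj _ => by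
      simpa using hagree j (by simp at hj; omega)).le

end LinearOrder

variable {q : ℕ}

section Language

variable [NeZero q]

def padZero (w : List (Fin q)) : ℕ → Fin q := fun i => w[i]?.getD 0

lemma iterate_shift_padZero (w : List (Fin q)) (s : ℕ) :
    shift^[s] (padZero w) = padZero (w.drop s) := by
  funext n
  simp [iterate_shift_apply, padZero]

lemma window_padZero (w : List (Fin q)) : window (padZero w) 0 w.length = w :=
  List.ext_getElem (by simp) fun i hi _ => by
    simp [padZero, List.getElem?_eq_getElem (by simpa using hi : i < w.length)]

lemma seqLe_padZero {w : List (Fin q)} {y : ℕ → Fin q} (h : w ≤ window y 0 w.length) :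
    SeqLe (padZero w) y := by
  rcases h.lt_or_eq with hlt | heq
  · obtain ⟨-, hlen⟩ | ⟨i, hi, _, hagree, hlt⟩ := List.lt_iff_exists.mp hlt
    · simp at hlen
    · refine Or.inr ⟨i, fun j hj => ?_, ?_⟩
      · simpa [padZero, List.getElem?_eq_getElem (hj.trans hi)] using hagree j hj
      · simpa [padZero, List.getElem?_eq_getElem hi] using hlt
  · refine seqLe_of_le fun i => ?_
    by_cases hi : i < w.length
    · simp [padZero, List.getElem?_eq_getElem hi, List.getElem_of_eq heq hi]
    · simp [padZero, List.getElem?_eq_none (not_lt.mp hi)]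

theorem mem_lang_iff {d : ℕ → Fin q} {w : List (Fin q)} :
    w ∈ Lang d ↔ ∀ p, w.drop p ≤ window d 0 (w.length - p) := by
  constructor
  · rintro ⟨x, hx, hocc⟩ p
    obtain ⟨t, ht⟩ := occurs_iff_exists_window.mp hocc
    calc w.drop p = window x (t + p) (w.length - p) := by rw [← drop_window, ht]
      _ = window (shift^[t + p] x) 0 (w.length - p) := by rw [window_iterate_shift, add_zero]
      _ ≤ window d 0 (w.length - p) := window_le_window_of_seqLe (hx (t + p)) _
  · intro h
    refine ⟨padZero w, fun s => ?_, occurs_iff_exists_window.mpr ⟨0, window_padZero w⟩⟩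
    rw [iterate_shift_padZero]
    exact seqLe_padZero (by simpa using h s)

theorem mem_pred_iff {d : ℕ → Fin q} {w s : List (Fin q)} (hw : w ∈ Lang d) :
    s ∈ Pred d w ↔ ∀ p < s.length, s.drop p < window d 0 (s.length - p) ∨
      s.drop p = window d 0 (s.length - p) ∧ w ≤ window d (s.length - p) w.length := by
  have hsplit : ∀ p < s.length, (s ++ w).drop p ≤ window d 0 ((s ++ w).length - p) ↔
      s.drop p < window d 0 (s.length - p) ∨
        s.drop p = window d 0 (s.length - p) ∧ w ≤ window d (s.length - p) w.length := by
    intro p hp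
    rw [List.drop_append_of_le_length hp.le, List.length_append,
      show s.length + w.length - p = s.length - p + w.length by omega, window_add, zero_add,
      List.append_le_append_iff_of_length_eq (by simp)]
  change s ++ w ∈ Lang d ↔ _
  refine mem_lang_iff.trans ⟨fun h p hp => (hsplit p hp).mp (h p), fun h p => ?_⟩
  by_cases hp : p < s.length
  · exact (hsplit p hp).mpr (h p hp)
  · rw [List.drop_append, List.drop_eq_nil_of_le (not_lt.mp hp), List.nil_append,
      List.length_append, show s.length + w.length - p = w.length - (p - s.length) by omega]
    exact mem_lang_iff.mp hw _

end Language

section TopFirstDigit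

variable {D : ℕ → Fin q}

lemma mem_xSet_self (hD : ∀ k, D (k + 1) < D 0) : D ∈ XSet D := by
  rintro (_ | k)
  · exact Or.inl rfl
  · exact Or.inr ⟨0, fun _ h => absurd h (Nat.not_lt_zero _), by
      simpa [iterate_shift_apply] using hD k⟩

lemma window_mem_lang (hD : ∀ k, D (k + 1) < D 0) (t n : ℕ) : window D t n ∈ Lang D :=
  ⟨D, mem_xSet_self hD, occurs_iff_exists_window.mpr ⟨t, by simp⟩⟩

lemma window_lt_window_zero (hD : ∀ k, D (k + 1) < D 0) {t n : ℕ} (ht : 0 < t) (hn : 0 < n) :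
    window D t n < window D 0 n := by
  obtain ⟨n, rfl⟩ := Nat.exists_eq_add_of_lt hn
  obtain ⟨t, rfl⟩ := Nat.exists_eq_add_of_lt ht
  simp only [window, List.ofFn_succ, List.cons_lt_cons_iff]
  exact Or.inl (by simpa using hD t)

variable [NeZero q]

lemma window_zero_mem_pred_iff (hD : ∀ k, D (k + 1) < D 0) {w : List (Fin q)}
    (hw : w ∈ Lang D) {t : ℕ} (ht : 0 < t) :
    window D 0 t ∈ Pred D w ↔ w ≤ window D t w.length := by
  rw [mem_pred_iff hw]
  simp only [length_window, drop_window, zero_add]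
  constructor
  · intro h
    simpa using h 0 ht
  · intro h p hp
    rcases Nat.eq_zero_or_pos p with rfl | hp0
    · simpa using h
    · exact Or.inl (window_lt_window_zero hD hp0 (by omega))

theorem pred_eq_pred_iff (hD : ∀ k, D (k + 1) < D 0) {w w' : List (Fin q)}
    (hw : w ∈ Lang D) (hw' : w' ∈ Lang D) (hlen : w.length = w'.length) :
    Pred D w = Pred D w' ↔
      ∀ t, 0 < t → (w ≤ window D t w.length ↔ w' ≤ window D t w.length) := by
  constructor
  · intro h t ht
    rw [← window_zero_mem_pred_iff hD hw ht, h, window_zero_mem_pred_iff hD hw' ht, hlen]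
  · intro h
    ext s
    rw [mem_pred_iff hw, mem_pred_iff hw', ← hlen]
    exact forall₂_congr fun p hp => or_congr Iff.rfl (and_congr Iff.rfl (h _ (by omega)))

theorem pred_eq_pred_window_zero_or_window (hD : ∀ k, D (k + 1) < D 0) {w : List (Fin q)}
    (hw : w ∈ Lang D) :
    Pred D w = Pred D (window D 0 w.length) ∨
      ∃ t, Pred D w = Pred D (window D (t + 1) w.length) := by
  by_cases hex : ∃ t, 0 < t ∧ w ≤ window D t w.length
  · right
    set S := (fun t => window D t w.length) '' {t | 0 < t ∧ w ≤ window D t w.length}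
    have hS : S.Finite :=
      (List.finite_length_eq (Fin q) w.length).subset (by rintro _ ⟨t, -, rfl⟩; simp)
    obtain ⟨_, ⟨_ | t, ⟨ht, hwt⟩, rfl⟩, hmin⟩ :=
      Set.exists_min_image S id hS (hex.elim fun t ht => ⟨_, t, ht, rfl⟩)
    · exact absurd ht (lt_irrefl 0)
    refine ⟨t, (pred_eq_pred_iff hD hw (window_mem_lang hD _ _) (by simp)).mpr
      fun s hs => ⟨fun h => hmin _ ⟨s, ⟨hs, h⟩, rfl⟩, hwt.trans⟩⟩
  · left
    push Not at hex
    have hn : 0 < w.length :=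
      List.length_pos_iff.mpr fun h0 => List.not_lt_nil _ (h0 ▸ hex 1 one_pos)
    exact (pred_eq_pred_iff hD hw (window_mem_lang hD _ _) (by simp)).mpr fun t ht =>
      ⟨fun h => absurd h (hex t ht).not_ge,
        fun h => absurd h (window_lt_window_zero hD ht hn).not_ge⟩

lemma window_eq_of_pred_eq (hD : ∀ k, D (k + 1) < D 0) {t t' n : ℕ} (ht : 0 < t) (ht' : 0 < t')
    (h : Pred D (window D t n) = Pred D (window D t' n)) : window D t n = window D t' n := by
  have h' := (pred_eq_pred_iff hD (window_mem_lang hD _ _) (window_mem_lang hD _ _)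
    (by simp)).mp h
  simp only [length_window] at h'
  exact le_antisymm ((h' t' ht').mpr le_rfl) ((h' t ht).mp le_rfl)

lemma pred_window_ne_pred_window_zero (hD : ∀ k, D (k + 1) < D 0) {t n : ℕ} (ht : 0 < t)
    (hn : 0 < n) : Pred D (window D t n) ≠ Pred D (window D 0 n) := by
  intro h
  have h' := (pred_eq_pred_iff hD (window_mem_lang hD _ _) (window_mem_lang hD _ _)
    (by simp)).mp h t ht
  simp only [length_window] at h'
  exact (window_lt_window_zero hD ht hn).not_ge (h'.mp le_rfl)

theorem predCount_eq_ncard_add_one (hD : ∀ k, D (k + 1) < D 0) {n : ℕ} (hn : 0 < n) :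
    PredCount D n = (Set.range fun t => window D (t + 1) n).ncard + 1 := by
  set W := Set.range fun t => window D (t + 1) n
  have hW : W.Finite := (List.finite_length_eq (Fin q) n).subset (by rintro _ ⟨t, rfl⟩; simp)
  have hinj : Set.InjOn (Pred D) W := by
    rintro _ ⟨t, rfl⟩ _ ⟨t', rfl⟩ h
    exact window_eq_of_pred_eq hD t.succ_pos t'.succ_pos h
  have hnotMem : Pred D (window D 0 n) ∉ Pred D '' W := by
    rintro ⟨_, ⟨t, rfl⟩, h⟩
    exact pred_window_ne_pred_window_zero hD t.succ_pos hn h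
  have hsets : {S | ∃ w ∈ Lang D, w.length = n ∧ S = Pred D w} =
      insert (Pred D (window D 0 n)) (Pred D '' W) := by
    ext S
    constructor
    · rintro ⟨w, hw, rfl, rfl⟩
      obtain h | ⟨t, h⟩ := pred_eq_pred_window_zero_or_window hD hw
      · exact Or.inl h
      · exact Or.inr ⟨_, ⟨t, rfl⟩, h.symm⟩
    · rintro (rfl | ⟨_, ⟨t, rfl⟩, rfl⟩)
      · exact ⟨_, window_mem_lang hD 0 n, length_window .., rfl⟩
      · exact ⟨_, window_mem_lang hD _ n, length_window .., rfl⟩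
  rw [PredCount, hsets, Set.ncard_insert_of_notMem hnotMem (hW.image _),
    hinj.ncard_image]

end TopFirstDigit

variable {m : ℕ}

def consTop (d : ℕ → Fin m) : ℕ → Fin (m + 2)
  | 0 => Fin.last (m + 1)
  | k + 1 => (d k).succ.castSucc

lemma consTop_succ_lt_zero (d : ℕ → Fin m) (k : ℕ) : consTop d (k + 1) < consTop d 0 :=
  Fin.castSucc_lt_last _

lemma admissible_consTop (d : ℕ → Fin m) : Admissible (consTop d) :=
  ⟨mem_xSet_self (consTop_succ_lt_zero d), fun N => ⟨N + 1, N.le_succ, by simp [consTop]⟩⟩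

lemma window_consTop_succ (d : ℕ → Fin m) (t n : ℕ) :
    window (consTop d) (t + 1) n = (window d t n).map (Fin.castSucc ∘ Fin.succ) := by
  rw [map_window]
  simp [window, consTop, add_right_comm]

lemma ncard_range_window_consTop (d : ℕ → Fin m) (n : ℕ) :
    (Set.range fun t => window (consTop d) (t + 1) n).ncard = Complexity d n := by
  have hinj : Function.Injective (List.map (Fin.castSucc ∘ Fin.succ : Fin m → Fin (m + 2))) :=
    List.map_injective_iff.mpr ((Fin.castSucc_injective _).comp (Fin.succ_injective _))
  rw [complexity_eq_ncard_range,
    ← Set.ncard_image_of_injective (Set.range fun t => window d t n) hinj, ← Set.range_comp]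
  simp only [Function.comp_def, window_consTop_succ]

end BetaShift

theorem stmt12_general (m : ℕ) (d : ℕ → Fin m) :
    ∃ m' : ℕ, 1 ≤ m' ∧ ∃ d' : ℕ → Fin m', Admissible d' ∧
      ∀ n, 1 ≤ n → PredCount d' n = Complexity d n + 1 :=
  ⟨m + 2, by omega, consTop d, admissible_consTop d, fun _ hn => by
    rw [predCount_eq_ncard_add_one (consTop_succ_lt_zero d) hn, ncard_range_window_consTop]⟩

/-- for any sequence `d`, `{Φ_n(d) + 1}` is the predecessor set
sequence of some β-shift. -/
theorem stmt12 (m : ℕ) (hm : 1 ≤ m) (d : ℕ → Fin m) :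
    ∃ m' : ℕ, 1 ≤ m' ∧ ∃ d' : ℕ → Fin m', Admissible d' ∧
      ∀ n, 1 ≤ n → PredCount d' n = Complexity d n + 1 :=
  stmt12_general m d
end

section
/- Let d : ℕ → A be admissible and not eventually periodic, let n ≥ 1, and let w, v ∈ L_n(X_d) be distinct words such that w occurs in d. Then the extender sets of w and v are distinct: E(w) ≠ E(v). -/
open BetaShift

namespace Stmt14Aux

open BetaShift

set_option linter.unusedSectionVars false

variable {m : ℕ} [NeZero m]

lemma shift_iter (x : ℕ → Fin m) : ∀ i n, (shift^[i] x) n = x (n + i) := by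
  intro i
  induction i with
  | zero => intro n; rfl
  | succ i ih =>
    intro n
    rw [Function.iterate_succ_apply']
    show (shift^[i] x) (n + 1) = _
    rw [ih]; congr 1; omega

/-- A finite word extended by zeros, as a sequence. -/
def wseq (u : List (Fin m)) : ℕ → Fin m := fun n => u.getD n 0

lemma wseq_lt {u : List (Fin m)} {n : ℕ} (h : n < u.length) : wseq u n = u[n] :=
  List.getD_eq_getElem u 0 h

lemma wseq_ge {u : List (Fin m)} {n : ℕ} (h : u.length ≤ n) : wseq u n = 0 :=
  List.getD_eq_default u 0 h

lemma seqLe_elim {x y : ℕ → Fin m} (h : SeqLe x y) (k : ℕ) :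
    (∀ j, j < k → x j = y j) ∨ ∃ i, i < k ∧ (∀ j, j < i → x j = y j) ∧ x i < y i := by
  rcases h with h | ⟨i, hag, hlt⟩
  · left; intro j _; rw [h]
  · by_cases hik : i < k
    · right; exact ⟨i, hik, hag, hlt⟩
    · left; intro j hj; exact hag j (lt_of_lt_of_le hj (not_lt.mp hik))

lemma seqLe_intro {x y : ℕ → Fin m}
    (h : ∀ k, (∀ j, j < k → x j = y j) ∨ ∃ i, i < k ∧ (∀ j, j < i → x j = y j) ∧ x i < y i) :
    SeqLe x y := by
  classical
  by_cases he : ∀ n, x n = y n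
  · exact Or.inl (funext he)
  · push_neg at he
    have hi : x (Nat.find he) ≠ y (Nat.find he) := Nat.find_spec he
    have hmin : ∀ j, j < Nat.find he → x j = y j := by
      intro j hj
      by_contra hc
      exact absurd (Nat.find_le hc) (not_le.mpr hj)
    rcases h (Nat.find he + 1) with h1 | ⟨i, hik, hag, hlt⟩
    · exact absurd (h1 _ (Nat.lt_succ_self _)) hi
    · have : i = Nat.find he := by
        rcases lt_trichotomy i (Nat.find he) with hc | hc | hc
        · exact absurd (hmin i hc) (ne_of_lt hlt)
        · exact hc
        · omega
      subst this
      exact Or.inr ⟨_, hmin, hlt⟩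

lemma seqLe_zero_tail {d : ℕ → Fin m} (hd2 : ∀ N, ∃ i, N ≤ i ∧ (d i).val ≠ 0)
    {x : ℕ → Fin m} (L : ℕ) (hag : ∀ j, j < L → x j = d j) (hz : ∀ j, L ≤ j → x j = 0) :
    SeqLe x d := by
  classical
  have hex : ∃ i, L ≤ i ∧ d i ≠ 0 := by
    obtain ⟨i, hi, hne⟩ := hd2 L
    exact ⟨i, hi, fun h => hne (by simp [h])⟩
  obtain ⟨hiL, hine⟩ := Nat.find_spec hex
  refine Or.inr ⟨Nat.find hex, ?_, ?_⟩
  · intro j hj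
    rcases lt_or_ge j L with hjL | hjL
    · exact hag j hjL
    · have hdj : d j = 0 := by
        by_contra hc
        exact absurd (Nat.find_le ⟨hjL, hc⟩) (not_le.mpr hj)
      rw [hz j hjL, hdj]
  · rw [hz _ hiL]
    exact lt_of_le_of_ne (Fin.zero_le _) (Ne.symm hine)

lemma lang_iff {d : ℕ → Fin m} (hd : Admissible d) (u : List (Fin m)) :
    u ∈ Lang d ↔ wseq u ∈ XSet d := by
  constructor
  · rintro ⟨x, hx, i, hocc⟩
    intro i'
    have hagree : ∀ j, i' + j < u.length → (shift^[i'] (wseq u)) j = (shift^[i + i'] x) j := by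
      intro j hj
      rw [shift_iter, shift_iter, wseq_lt (by omega)]
      have := hocc ⟨i' + j, by omega⟩
      simp only [List.get_eq_getElem] at this
      rw [show j + (i + i') = i + (i' + j) by omega, this]
      congr 1
      omega
    rcases le_or_gt u.length i' with hLi | hLi
    · refine seqLe_zero_tail hd.2 0 (by omega) ?_
      intro j _
      rw [shift_iter]
      exact wseq_ge (by omega)
    · have hs : SeqLe (shift^[i + i'] x) d := hx (i + i')
      rcases seqLe_elim hs (u.length - i') with heq | ⟨i₀, hi₀, hag, hlt⟩
      · refine seqLe_zero_tail hd.2 (u.length - i') ?_ ?_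
        · intro j hj
          rw [hagree j (by omega)]
          exact heq j hj
        · intro j hj
          rw [shift_iter]
          exact wseq_ge (by omega)
      · refine Or.inr ⟨i₀, ?_, ?_⟩
        · intro j hj
          rw [hagree j (by omega)]
          exact hag j hj
        · rw [hagree i₀ (by omega)]
          exact hlt
  · intro h
    refine ⟨wseq u, h, 0, ?_⟩
    intro j
    rw [wseq_lt (by simpa using j.isLt)]
    simp

lemma wseq_drop (u : List (Fin m)) (j : ℕ) : wseq (u.drop j) = shift^[j] (wseq u) := by
  funext n
  rw [shift_iter]
  show (u.drop j).getD n 0 = u.getD (n + j) 0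
  rcases lt_or_ge n (u.drop j).length with h | h
  · rw [List.getD_eq_getElem _ _ h, List.getElem_drop,
      List.getD_eq_getElem _ _ (by simp at h ⊢; omega)]
    congr 1; omega
  · rw [List.getD_eq_default _ _ h, List.getD_eq_default _ _ (by simp at h ⊢; omega)]

lemma lang_drop {d : ℕ → Fin m} (hd : Admissible d) {u : List (Fin m)}
    (hu : u ∈ Lang d) (j : ℕ) : u.drop j ∈ Lang d := by
  rw [lang_iff hd] at hu ⊢
  rw [wseq_drop]
  intro i
  rw [← Function.iterate_add_apply]
  exact hu (i + j)

lemma lang_suffix {d : ℕ → Fin m} (hd : Admissible d) {z y : List (Fin m)}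
    (hzy : z <:+ y) (hy : y ∈ Lang d) : z ∈ Lang d := by
  obtain ⟨t, rfl⟩ := hzy
  have := lang_drop hd hy t.length
  rwa [List.drop_left] at this

/-- The word `d_i d_{i+1} ... d_{i+k-1}`. -/
def winword (d : ℕ → Fin m) (i k : ℕ) : List (Fin m) := List.ofFn (fun j : Fin k => d (i + j))

@[simp] lemma winword_length (d : ℕ → Fin m) (i k : ℕ) : (winword d i k).length = k := by
  simp [winword]

lemma winword_getElem (d : ℕ → Fin m) (i k : ℕ) {j : ℕ} (h : j < (winword d i k).length) :
    (winword d i k)[j] = d (i + j) := by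
  simp [winword]

lemma prefixWord_eq_winword (d : ℕ → Fin m) (k : ℕ) : prefixWord d k = winword d 0 k := by
  unfold prefixWord winword
  congr 1
  funext j
  rw [Nat.zero_add]

lemma winword_mem {d : ℕ → Fin m} (hd : Admissible d) (i k : ℕ) : winword d i k ∈ Lang d := by
  refine ⟨d, hd.1, i, ?_⟩
  intro j
  have hj : (j : ℕ) < (winword d i k).length := j.isLt
  simp only [List.get_eq_getElem]
  rw [winword_getElem d i k hj]

lemma winword_split (d : ℕ → Fin m) (i k M : ℕ) :
    winword d i (k + M) = winword d i k ++ winword d (i + k) M := by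
  apply List.ext_getElem
  · simp
  · intro n h1 h2
    simp only [winword_length] at h1
    rw [winword_getElem d i (k + M) (by simpa using h1)]
    rcases lt_or_ge n k with h | h
    · rw [List.getElem_append_left (by simpa using h), winword_getElem]
    · rw [List.getElem_append_right (by simpa using h)]
      rw [winword_getElem]
      simp only [winword_length]
      congr 1
      omega

/-- "Compactness": if every finite prefix of `z` agrees with a word of the language,
then `z ∈ X_d`. -/
lemma mem_XSet_of_approx {d : ℕ → Fin m} (hd : Admissible d) (z : ℕ → Fin m)
    (h : ∀ M, ∃ u ∈ Lang d, ∀ n, n < M → wseq u n = z n) : z ∈ XSet d := by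
  intro i
  apply seqLe_intro
  intro k
  obtain ⟨u, hu, hagree⟩ := h (i + k)
  have hs : SeqLe (shift^[i] (wseq u)) d := (lang_iff hd u).mp hu i
  have hag2 : ∀ j, j < k → (shift^[i] z) j = (shift^[i] (wseq u)) j := by
    intro j hj
    rw [shift_iter, shift_iter, hagree (j + i) (by omega)]
  rcases seqLe_elim hs k with heq | ⟨i₀, hi₀, hag, hlt⟩
  · left; intro j hj; rw [hag2 j hj]; exact heq j hj
  · right
    exact ⟨i₀, hi₀, fun j hj => by rw [hag2 j (by omega)]; exact hag j hj,
      by rw [hag2 i₀ hi₀]; exact hlt⟩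

lemma wseq_pw_append_win (d : ℕ → Fin m) (a b M nn : ℕ) (h : nn < b + M) :
    wseq (prefixWord d b ++ winword d a M) nn
      = if nn < b then d nn else d (a + (nn - b)) := by
  unfold wseq
  rcases lt_or_ge nn b with h1 | h1
  · rw [List.getD_append _ _ _ _ (by simp [prefixWord]; omega), if_pos h1,
      List.getD_eq_getElem _ _ (by simp [prefixWord]; omega)]
    simp [prefixWord]
  · rw [List.getD_append_right _ _ _ _ (by simp [prefixWord]; omega), if_neg (not_lt.mpr h1),
      List.getD_eq_getElem _ _ (by simp [prefixWord]; omega)]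
    rw [winword_getElem]
    simp [prefixWord]

end Stmt14Aux


open Stmt14Aux


/-- in a non-sofic β-shift, a word of length `n` occurring in `d`
has an extender set distinct from that of any other word of length `n`. -/
theorem stmt14 (m : ℕ) (hm : 1 ≤ m) (d : ℕ → Fin m) (hd : Admissible d)
    (hnp : ¬ EventuallyPeriodic d) (n : ℕ) (hn : 1 ≤ n)
    (w v : List (Fin m)) (hw : w ∈ Lang d) (hv : v ∈ Lang d)
    (hwl : w.length = n) (hvl : v.length = n) (hne : w ≠ v) (hwd : Occurs w d) :
    Ext d w ≠ Ext d v := by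
  haveI : NeZero m := ⟨by omega⟩
  classical
  intro hE
  obtain ⟨i, hocc⟩ := hwd
  set b := i + n with hb
  set s := prefixWord d i with hs
  -- `w` is the window of `d` at `i`
  have hw_eq : w = winword d i n := by
    apply List.ext_getElem (by simp [hwl])
    intro j h1 h2
    rw [winword_getElem d i n h2]
    have := hocc ⟨j, h1⟩
    simp only [List.get_eq_getElem] at this
    exact this.symm
  have hsw : s ++ w = prefixWord d b := by
    rw [hs, hw_eq, prefixWord_eq_winword, prefixWord_eq_winword, winword_split d 0 i n,
      Nat.zero_add]
  have hpb : prefixWord d b ∈ Lang d := by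
    rw [prefixWord_eq_winword]; exact winword_mem hd 0 b
  -- `s ++ v` is in the language
  have hzmem : s ++ v ∈ Lang d := by
    have h1 : (s, ([] : List (Fin m))) ∈ Ext d w := by
      show s ++ w ++ [] ∈ Lang d
      rw [List.append_nil, hsw]; exact hpb
    rw [hE] at h1
    have h2 : s ++ v ++ [] ∈ Lang d := h1
    rwa [List.append_nil] at h2
  set z := s ++ v with hz
  have hzlen : z.length = b := by
    simp [hz, hs, prefixWord, hvl, hb]
  -- the largest prefix of `d` that is a suffix of `z`
  set P : ℕ → Prop := fun k => prefixWord d k <:+ z with hP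
  set a := Nat.findGreatest P b with ha
  have hP0 : P 0 := ⟨z, by simp [prefixWord]⟩
  have haz : prefixWord d a <:+ z := Nat.findGreatest_spec (Nat.zero_le b) hP0
  have hale : a ≤ b := Nat.findGreatest_le b
  have hmax : ∀ k, a < k → k ≤ b → ¬ prefixWord d k <:+ z := by
    intro k h1 h2
    exact Nat.findGreatest_is_greatest h1 h2
  have halt : a < b := by
    rcases lt_or_eq_of_le hale with h | h
    · exact h
    · exfalso
      have hsz : prefixWord d b <:+ z := h ▸ haz
      have heq : prefixWord d b = z :=
        hsz.eq_of_length (by rw [hzlen]; simp [prefixWord])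
      exact hne (List.append_cancel_left (hsw.trans (heq.trans hz)))
  -- the key equivalence: `p_b` and `p_a` have the same followers
  have key : ∀ u : List (Fin m),
      (prefixWord d b ++ u ∈ Lang d ↔ prefixWord d a ++ u ∈ Lang d) := by
    intro u
    obtain ⟨t, ht⟩ := haz
    have htlen : t.length = b - a := by
      have h1 := congrArg List.length ht
      simp only [List.length_append, prefixWord, List.length_ofFn, hzlen] at h1
      omega
    constructor
    · intro hu
      have h1 : (s, u) ∈ Ext d w := by
        show s ++ w ++ u ∈ Lang d
        rw [hsw]; exact hu
      rw [hE] at h1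
      have h2 : z ++ u ∈ Lang d := h1
      refine lang_suffix hd ⟨t, ?_⟩ h2
      rw [← List.append_assoc, ← ht]
    · intro hu
      have hzu : z ++ u ∈ Lang d := by
        rw [lang_iff hd]
        intro i'
        rcases le_or_gt (b - a) i' with hge | hlt
        · -- the shift lands inside `prefixWord d a ++ u`
          have hagree : ∀ nn, (shift^[i'] (wseq (z ++ u))) nn
              = (shift^[i' - (b - a)] (wseq (prefixWord d a ++ u))) nn := by
            intro nn
            rw [shift_iter, shift_iter]
            show (z ++ u).getD (nn + i') 0 = (prefixWord d a ++ u).getD (nn + (i' - (b - a))) 0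
            have hassoc : z ++ u = t ++ (prefixWord d a ++ u) := by
              rw [← List.append_assoc, ← ht]
            rw [hassoc, List.getD_append_right _ _ _ _ (by omega)]
            congr 1
            omega
          have hX := (lang_iff hd _).mp hu (i' - (b - a))
          rcases hX with hEq | ⟨i₀, hag, hlt'⟩
          · left; funext nn; rw [hagree nn]; rw [hEq]
          · right
            exact ⟨i₀, fun j hj => by rw [hagree j]; exact hag j hj,
              by rw [hagree i₀]; exact hlt'⟩
        · -- the shift starts inside `t`: strict comparison within `z`
          have hs' : SeqLe (shift^[i'] (wseq z)) d := (lang_iff hd z).mp hzmem i'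
          have hstrict : ∃ i₀, i₀ < b - i' ∧
              (∀ j, j < i₀ → (shift^[i'] (wseq z)) j = d j) ∧ (shift^[i'] (wseq z)) i₀ < d i₀ := by
            rcases seqLe_elim hs' (b - i') with hEq | hstr
            · exfalso
              apply hmax (b - i') (by omega) (by omega)
              have hdropeq : z.drop i' = prefixWord d (b - i') := by
                apply List.ext_getElem (by simp [prefixWord, hzlen])
                intro nn h1 h2
                rw [List.getElem_drop]
                have hb1 : nn + i' < z.length := by
                  simp only [List.length_drop, hzlen] at h1; omega
                have h3 : wseq z (nn + i') = d nn := by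
                  have h4 := hEq nn (by simp only [prefixWord, List.length_ofFn] at h2; omega)
                  rwa [shift_iter] at h4
                calc z[i' + nn] = wseq z (i' + nn) := (wseq_lt (by omega)).symm
                  _ = d nn := by rw [Nat.add_comm i' nn]; exact h3
                  _ = (prefixWord d (b - i'))[nn] := by simp [prefixWord]
              exact ⟨z.take i', by rw [← hdropeq, List.take_append_drop]⟩
            · exact hstr
          obtain ⟨i₀, hi₀, hag, hlt'⟩ := hstrict
          have hagree : ∀ j, j ≤ i₀ → (shift^[i'] (wseq (z ++ u))) j = (shift^[i'] (wseq z)) j := by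
            intro j hj
            rw [shift_iter, shift_iter]
            show (z ++ u).getD (j + i') 0 = z.getD (j + i') 0
            exact List.getD_append _ _ _ _ (by rw [hzlen]; omega)
          right
          exact ⟨i₀, fun j hj => by rw [hagree j (le_of_lt hj)]; exact hag j hj,
            by rw [hagree i₀ le_rfl]; exact hlt'⟩
      have h1 : (s, u) ∈ Ext d v := by
        show s ++ v ++ u ∈ Lang d
        exact hzu
      rw [← hE] at h1
      have h2 : s ++ w ++ u ∈ Lang d := h1
      rwa [hsw] at h2
  -- Step C: derive eventual periodicity / contradiction
  have hub : ∀ M, prefixWord d b ++ winword d a M ∈ Lang d := by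
    intro M
    rw [key]
    have hmm := winword_mem hd 0 (a + M)
    rwa [winword_split d 0 a M, Nat.zero_add, ← prefixWord_eq_winword] at hmm
  have hua : ∀ M, prefixWord d a ++ winword d b M ∈ Lang d := by
    intro M
    rw [← key]
    have hmm := winword_mem hd 0 (b + M)
    rwa [winword_split d 0 b M, Nat.zero_add, ← prefixWord_eq_winword] at hmm
  set z1 : ℕ → Fin m := fun nn => if nn < b then d nn else d (a + (nn - b)) with hz1
  set z2 : ℕ → Fin m := fun nn => if nn < a then d nn else d (b + (nn - a)) with hz2
  have hz1val : ∀ nn, z1 nn = if nn < b then d nn else d (a + (nn - b)) := fun _ => rfl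
  have hz2val : ∀ nn, z2 nn = if nn < a then d nn else d (b + (nn - a)) := fun _ => rfl
  have hz1mem : z1 ∈ XSet d := by
    apply mem_XSet_of_approx hd
    intro M
    refine ⟨prefixWord d b ++ winword d a M, hub M, ?_⟩
    intro nn hnn
    rw [wseq_pw_append_win d a b M nn (by omega), hz1val]
  have hz2mem : z2 ∈ XSet d := by
    apply mem_XSet_of_approx hd
    intro M
    refine ⟨prefixWord d a ++ winword d b M, hua M, ?_⟩
    intro nn hnn
    rw [wseq_pw_append_win d b a M nn (by omega), hz2val]
  have h1 : SeqLe z1 d := by simpa using hz1mem 0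
  have h2 : SeqLe z2 d := by simpa using hz2mem 0
  have hper : (∀ j, d (a + j) = d (b + j)) → False := by
    intro hj
    apply hnp
    refine ⟨b - a, by omega, a, ?_⟩
    intro i2 hi2
    have h3 := hj (i2 - a)
    rw [show a + (i2 - a) = i2 from by omega,
      show b + (i2 - a) = i2 + (b - a) from by omega] at h3
    exact h3.symm
  have hf : ∃ f, (∀ j, j < f → d (a + j) = d (b + j)) ∧ d (a + f) < d (b + f) := by
    rcases h1 with he | ⟨c, hag, hlt⟩
    · exfalso
      apply hper
      intro j
      have h3 := congrFun he (b + j)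
      rw [hz1val, if_neg (by omega), show a + (b + j - b) = a + j from by omega] at h3
      exact h3
    · have hcb : b ≤ c := by
        by_contra hc
        push_neg at hc
        rw [hz1val, if_pos hc] at hlt
        exact lt_irrefl _ hlt
      refine ⟨c - b, ?_, ?_⟩
      · intro j hj
        have h3 := hag (b + j) (by omega)
        rw [hz1val, if_neg (by omega), show a + (b + j - b) = a + j from by omega] at h3
        exact h3
      · rw [hz1val, if_neg (by omega)] at hlt
        rw [show b + (c - b) = c from by omega]
        exact hlt
  have he : ∃ e, (∀ j, j < e → d (b + j) = d (a + j)) ∧ d (b + e) < d (a + e) := by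
    rcases h2 with he | ⟨c, hag, hlt⟩
    · exfalso
      apply hper
      intro j
      have h3 := congrFun he (a + j)
      rw [hz2val, if_neg (by omega), show b + (a + j - a) = b + j from by omega] at h3
      exact h3.symm
    · have hca : a ≤ c := by
        by_contra hc
        push_neg at hc
        rw [hz2val, if_pos hc] at hlt
        exact lt_irrefl _ hlt
      refine ⟨c - a, ?_, ?_⟩
      · intro j hj
        have h3 := hag (a + j) (by omega)
        rw [hz2val, if_neg (by omega), show b + (a + j - a) = b + j from by omega] at h3
        exact h3
      · rw [hz2val, if_neg (by omega)] at hlt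
        rw [show a + (c - a) = c from by omega]
        exact hlt
  obtain ⟨f, hf1, hf2⟩ := hf
  obtain ⟨e, he1, he2⟩ := he
  rcases lt_trichotomy e f with hef | hef | hef
  · rw [hf1 e hef] at he2
    exact lt_irrefl _ he2
  · subst hef
    exact absurd hf2 (not_lt.mpr (le_of_lt he2))
  · rw [he1 f hef] at hf2
    exact lt_irrefl _ hf2
end

section
/- Let d : ℕ → A be admissible, let n ≥ 1, and let w, v be distinct words of length n each of which occurs in d. Then the predecessor sets of w and v are distinct: P(w) ≠ P(v). -/
open BetaShift

private lemma shift_iter {A : Type*} (x : ℕ → A) : ∀ j a, shift^[j] x a = x (a + j)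
  | 0, a => rfl
  | j+1, a => by
      rw [Function.iterate_succ_apply']
      show (shift^[j] x) (a + 1) = x (a + (j + 1))
      rw [shift_iter x j (a+1)]
      congr 1
      omega

private lemma getElem_pre {m : ℕ} (d : ℕ → Fin m) (i : ℕ) (u : List (Fin m)) (a : ℕ)
    (hb : a < (prefixWord d i ++ u).length) :
    (prefixWord d i ++ u)[a]'hb =
      if h : a < i then d a else u[a - i]'(by simp [prefixWord] at hb; omega) := by
  have hslen : (prefixWord d i).length = i := by simp [prefixWord]
  by_cases h : a < i
  · rw [dif_pos h, List.getElem_append_left (by rw [hslen]; exact h)]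
    simp [prefixWord]
  · rw [dif_neg h, List.getElem_append_right (by rw [hslen]; omega)]
    simp only [hslen]

private lemma key {m n : ℕ} (z : Fin m) (d : ℕ → Fin m) (hd : Admissible d)
    (w v : List (Fin m)) (hwl : w.length = n) (hvl : v.length = n)
    (hwd : Occurs w d) (t : ℕ) (htn : t < n)
    (hagree : ∀ j, j < t → w.getD j z = v.getD j z)
    (hlt : w.getD t z < v.getD t z) :
    Pred d w ≠ Pred d v := by
  obtain ⟨i, hw⟩ := hwd
  have hwd' : ∀ k, k < n → d (i + k) = w.getD k z := by
    intro k hk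
    have hk' : k < w.length := by omega
    rw [List.getD_eq_getElem w z hk']
    simpa using hw ⟨k, hk'⟩
  intro hP
  have hslen : (prefixWord d i).length = i := by simp [prefixWord]
  have hsw : prefixWord d i ∈ Pred d w := by
    refine ⟨d, hd.1, 0, ?_⟩
    intro k
    have hb : (k : ℕ) < (prefixWord d i ++ w).length := k.isLt
    have hk : (k : ℕ) < i + n := by
      simp only [List.length_append, hslen, hwl] at hb; omega
    rw [List.get_eq_getElem, getElem_pre d i w k hb]
    by_cases hki : (k : ℕ) < i
    · simp [hki]
    · rw [dif_neg hki, ← List.getD_eq_getElem w z (by omega),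
        ← hwd' ((k : ℕ) - i) (by omega)]
      congr 1
      omega
  rw [hP] at hsw
  obtain ⟨x, hxX, j, hx⟩ := hsw
  have hlen : (prefixWord d i ++ v).length = i + n := by
    simp [hslen, hvl]
  have hgetv : ∀ a : ℕ, a < i + n →
      x (j + a) = if h : a < i then d a else v.getD (a - i) z := by
    intro a ha
    have h1 : a < (prefixWord d i ++ v).length := by rw [hlen]; omega
    have h2 := hx ⟨a, h1⟩
    rw [List.get_eq_getElem] at h2
    simp only [Fin.val_mk] at h2
    rw [getElem_pre d i v a h1] at h2
    rw [h2]
    by_cases h : a < i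
    · rw [dif_pos h, dif_pos h]
    · rw [dif_neg h, dif_neg h, List.getD_eq_getElem v z (by omega)]
  have hagree' : ∀ a, a < i + t → x (j + a) = d a := by
    intro a ha
    rw [hgetv a (by omega)]
    by_cases h1 : a < i
    · rw [dif_pos h1]
    · rw [dif_neg h1, ← hagree (a - i) (by omega), ← hwd' (a - i) (by omega)]
      congr 1
      omega
  have hd1 : d (i + t) = w.getD t z := hwd' t htn
  have hx1 : x (j + (i + t)) = v.getD t z := by
    rw [hgetv (i + t) (by omega), dif_neg (by omega)]
    congr 1
    omega
  rcases hxX j with heq | ⟨a, hpre, hstrict⟩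
  · have := congrFun heq (i + t)
    rw [shift_iter, Nat.add_comm, hx1, hd1] at this
    exact absurd this hlt.ne'
  · rw [shift_iter, Nat.add_comm] at hstrict
    rcases lt_trichotomy a (i + t) with h | h | h
    · rw [hagree' a h] at hstrict
      exact lt_irrefl _ hstrict
    · subst h
      rw [hx1, hd1] at hstrict
      exact absurd hstrict hlt.asymm
    · have := hpre (i + t) h
      rw [shift_iter, Nat.add_comm, hx1, hd1] at this
      exact absurd this hlt.ne'

/-- distinct words of length `n` both occurring in `d` have distinct
predecessor sets. -/
theorem stmt15 (m : ℕ) (hm : 1 ≤ m) (d : ℕ → Fin m) (hd : Admissible d)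
    (n : ℕ) (hn : 1 ≤ n) (w v : List (Fin m))
    (hwl : w.length = n) (hvl : v.length = n) (hne : w ≠ v)
    (hwd : Occurs w d) (hvd : Occurs v d) :
    Pred d w ≠ Pred d v := by
  have hz : 0 < m := hm
  set z : Fin m := ⟨0, hz⟩ with hzdef
  have hex : ∃ k, w.getD k z ≠ v.getD k z := by
    by_contra h
    push_neg at h
    apply hne
    apply List.ext_getElem (by omega)
    intro k h1 h2
    have := h k
    rwa [List.getD_eq_getElem _ _ h1, List.getD_eq_getElem _ _ h2] at this
  classical
  set t := Nat.find hex with htdef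
  have ht : w.getD t z ≠ v.getD t z := Nat.find_spec hex
  have hagree : ∀ j, j < t → w.getD j z = v.getD j z := fun j hj =>
    not_not.mp (Nat.find_min hex hj)
  have htn : t < n := by
    by_contra hc
    apply ht
    rw [List.getD_eq_default w z (show w.length ≤ t by omega),
      List.getD_eq_default v z (show v.length ≤ t by omega)]
  rcases lt_or_gt_of_ne ht with h | h
  · exact key z d hd w v hwl hvl hwd t htn hagree h
  · exact (key z d hd v w hvl hwl hvd t htn
      (fun j hj => (hagree j hj).symm) h).symm
end

section
/- Let d : ℕ → A be admissible and not eventually periodic. Then for every n ≥ 1, the number of distinct extender sets of words of length n is at most the product of the numbers of distinct follower and predecessor sets: |E(n)| ≤ |F(n)| · |P(n)|. -/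
/-!
Let `c(v)` be the length of the longest prefix of `d` that is a suffix of `v`. Since every
shift of `d` is `⪯ d`, the longest such prefix imposes the strongest constraint, and
`v ++ u ∈ L(X_d)` iff `v, u ∈ L(X_d)` and `u 0^∞ ⪯ σ^{c(v)} d`. So `F(v)` depends only on `c(v)`,
and injectively so when `d` is not eventually periodic.

If no left extension `s ++ w ∈ L(X_d)` changes the class index, then `E(w) = P(w) × F(w)`.
Otherwise `w` occurs in `d`; two words of the same length occurring in `d` with the same
predecessor set are equal, since prefixing either one by the part of `d` before the other's
occurrence shows each is lexicographically below the other. Sending such words to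
`(F(d_n), P(w))` instead of `(F(w), P(w))` keeps the map to `F(n) × P(n)` injective on extender
sets: an inactive `w'` with `F(w') = F(d_n)` is `d_n` itself, which occurs in `d` at `0`.
-/

namespace BetaShift

section Words

variable {A : Type*}

theorem shift_iterate_apply (x : ℕ → A) (k i : ℕ) : shift^[k] x i = x (i + k) := by
  induction k generalizing x with
  | zero => rfl
  | succ k ih => rw [Function.iterate_succ_apply, ih]; rfl

theorem eventuallyPeriodic_of_shift_iterate_eq {x : ℕ → A} {a b : ℕ} (hab : a < b)
    (h : shift^[a] x = shift^[b] x) : EventuallyPeriodic x := by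
  refine ⟨b - a, by omega, a, fun i hi => ?_⟩
  have := congrFun h (i - a)
  simp only [shift_iterate_apply] at this
  rw [Nat.sub_add_cancel hi] at this
  rw [this]
  congr 1
  omega

@[simp]
theorem length_prefixWord (x : ℕ → A) (k : ℕ) : (prefixWord x k).length = k :=
  List.length_ofFn

@[simp]
theorem getElem_prefixWord (x : ℕ → A) {k j : ℕ} (h : j < (prefixWord x k).length) :
    (prefixWord x k)[j] = x j := by
  simp [prefixWord]

theorem prefixWord_add (x : ℕ → A) (k l : ℕ) :
    prefixWord x (k + l) = prefixWord x k ++ prefixWord (shift^[k] x) l := by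
  refine List.ext_getElem (by simp) fun j h₁ h₂ => ?_
  simp only [getElem_prefixWord, List.getElem_append, length_prefixWord]
  split_ifs with hj
  · rfl
  · rw [shift_iterate_apply]
    congr 1
    omega

theorem prefixWord_shift_iterate_of_suffix {x : ℕ → A} {w : List A} {t : ℕ}
    (h : w <:+ prefixWord x t) : prefixWord (shift^[t - w.length] x) w.length = w := by
  obtain ⟨z, hz⟩ := h
  have hlen : z.length + w.length = t := by simpa using congrArg List.length hz
  subst hlen
  rw [prefixWord_add] at hz
  rw [Nat.add_sub_cancel]
  exact ((List.append_inj hz (by simp)).2).symm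

theorem occurs_iff_exists_prefixWord {w : List A} {x : ℕ → A} :
    Occurs w x ↔ ∃ i, prefixWord (shift^[i] x) w.length = w := by
  simp only [Occurs, List.ext_getElem_iff, length_prefixWord, getElem_prefixWord,
    true_and]
  simp only [shift_iterate_apply]
  refine exists_congr fun i => ⟨fun h j hj _ => ?_, fun h j => ?_⟩
  · simpa [add_comm] using h ⟨j, hj⟩
  · simpa [add_comm] using h j j.isLt (by simp)

theorem Occurs.of_infix {w t : List A} {x : ℕ → A} (hw : Occurs w x) (ht : t <:+: w) :
    Occurs t x := by
  rw [occurs_iff_exists_prefixWord] at *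
  obtain ⟨i, hi⟩ := hw
  obtain ⟨s, u, rfl⟩ := ht
  refine ⟨s.length + i, ?_⟩
  simp only [List.length_append, prefixWord_add, Function.iterate_add_apply] at hi
  have := (List.append_inj hi (by simp)).1
  rw [Function.iterate_add_apply]
  exact (List.append_inj this (by simp)).2

theorem occurs_of_suffix_prefixWord {w : List A} {x : ℕ → A} {t : ℕ}
    (h : w <:+ prefixWord x t) : Occurs w x :=
  occurs_iff_exists_prefixWord.2 ⟨_, prefixWord_shift_iterate_of_suffix h⟩

end Words

section SeqLe

variable {A : Type*} [LinearOrder A]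

theorem seqLe_iff_toLex_le {x y : ℕ → A} : SeqLe x y ↔ toLex x ≤ toLex y := by
  rw [le_iff_eq_or_lt, toLex_inj]
  rfl

theorem SeqLe.trans {x y z : ℕ → A} (hxy : SeqLe x y) (hyz : SeqLe y z) : SeqLe x z := by
  rw [seqLe_iff_toLex_le] at *
  exact hxy.trans hyz

theorem SeqLe.antisymm {x y : ℕ → A} (hxy : SeqLe x y) (hyx : SeqLe y x) : x = y := by
  rw [seqLe_iff_toLex_le] at *
  exact toLex_inj.1 (le_antisymm hxy hyx)

theorem seqLe_shift_iterate_iff {x y : ℕ → A} {r : ℕ} (h : ∀ j < r, x j = y j) :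
    SeqLe (shift^[r] x) (shift^[r] y) ↔ SeqLe x y := by
  simp only [SeqLe, shift_iterate_apply]
  constructor
  · rintro (heq | ⟨i, hi, hlt⟩)
    · refine Or.inl (funext fun j => ?_)
      rcases lt_or_ge j r with hj | hj
      · exact h j hj
      · have := congrFun heq (j - r)
        rwa [shift_iterate_apply, shift_iterate_apply, Nat.sub_add_cancel hj] at this
    · refine Or.inr ⟨i + r, fun j hj => ?_, hlt⟩
      rcases lt_or_ge j r with hjr | hjr
      · exact h j hjr
      · simpa [Nat.sub_add_cancel hjr] using hi (j - r) (by omega)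
  · rintro (rfl | ⟨i, hi, hlt⟩)
    · exact Or.inl rfl
    have hri : r ≤ i := by
      by_contra! hir
      exact hlt.ne (h i hir)
    refine Or.inr ⟨i - r, fun j hj => hi (j + r) (by omega), ?_⟩
    rwa [Nat.sub_add_cancel hri]

theorem seqLe_of_eqOn_of_eq_bot [OrderBot A] {x y : ℕ → A} {r : ℕ}
    (hlt : ∀ j < r, x j = y j) (hge : ∀ j, r ≤ j → x j = ⊥) : SeqLe x y := by
  rw [seqLe_iff_toLex_le, ← not_lt]
  rintro ⟨i, -, hyx⟩
  rcases lt_or_ge i r with hi | hi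
  · exact hyx.ne (hlt i hi).symm
  · have hyx : y i < x i := hyx
    rw [hge i hi] at hyx
    exact not_lt_bot hyx

end SeqLe

section Pad

variable {A : Type*} [LinearOrder A] [OrderBot A]

def pad (u : List A) : ℕ → A := fun i => u.getD i ⊥

theorem pad_of_lt {u : List A} {i : ℕ} (h : i < u.length) : pad u i = u[i] :=
  List.getD_eq_getElem u ⊥ h

theorem pad_of_le {u : List A} {i : ℕ} (h : u.length ≤ i) : pad u i = ⊥ :=
  List.getD_eq_default u ⊥ h

theorem pad_append_of_lt {a u : List A} {i : ℕ} (h : i < a.length) :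
    pad (a ++ u) i = pad a i :=
  List.getD_append a u ⊥ i h

theorem shift_iterate_pad_append (a u : List A) : shift^[a.length] (pad (a ++ u)) = pad u := by
  funext j
  rw [shift_iterate_apply, pad, List.getD_append_right _ _ _ _ (by omega), Nat.add_sub_cancel]
  rfl

theorem shift_iterate_pad (u : List A) (k : ℕ) : shift^[k] (pad u) = pad (u.drop k) := by
  funext j
  rcases lt_or_ge (j + k) u.length with h | h
  · rw [shift_iterate_apply, pad_of_lt h, pad_of_lt (by simp; omega), List.getElem_drop]
    congr 1
    omega
  · rw [shift_iterate_apply, pad_of_le h, pad_of_le (by simp; omega)]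

theorem pad_injective_of_length_eq {a b : List A} (hl : a.length = b.length)
    (h : pad a = pad b) : a = b :=
  List.ext_getElem hl fun j h₁ h₂ => by rw [← pad_of_lt h₁, ← pad_of_lt h₂, h]

theorem pad_prefixWord_of_lt (x : ℕ → A) {k j : ℕ} (h : j < k) : pad (prefixWord x k) j = x j := by
  rw [pad_of_lt (by simpa using h), getElem_prefixWord]

theorem eq_prefixWord_iff {a : List A} {y : ℕ → A} :
    a = prefixWord y a.length ↔ ∀ j < a.length, pad a j = y j := by
  simp only [List.ext_getElem_iff, length_prefixWord, getElem_prefixWord, true_and]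
  exact ⟨fun h j hj => by rw [pad_of_lt hj, h j hj (by simpa using hj)],
    fun h j hj _ => by rw [← pad_of_lt hj, h j hj]⟩

theorem seqLe_pad_prefixWord (x : ℕ → A) (k : ℕ) : SeqLe (pad (prefixWord x k)) x :=
  seqLe_of_eqOn_of_eq_bot (fun _ hj => pad_prefixWord_of_lt x hj)
    (fun _ hj => pad_of_le (by simpa using hj))

theorem exists_lt_of_seqLe_of_ne_prefixWord {a : List A} {y : ℕ → A} (h : SeqLe (pad a) y)
    (hne : a ≠ prefixWord y a.length) :
    ∃ i < a.length, (∀ j < i, pad a j = y j) ∧ pad a i < y i := by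
  rw [Ne, eq_prefixWord_iff] at hne
  rcases h with heq | ⟨i, hi, hlt⟩
  · exact absurd (fun j _ => congrFun heq j) hne
  · refine ⟨i, ?_, hi, hlt⟩
    by_contra! hai
    exact hne fun j hj => hi j (by omega)

theorem pad_append_seqLe_iff (a u : List A) (y : ℕ → A) :
    SeqLe (pad (a ++ u)) y ↔
      SeqLe (pad a) y ∧ (a = prefixWord y a.length → SeqLe (pad u) (shift^[a.length] y)) := by
  have hagree : ∀ j < a.length, pad (a ++ u) j = pad a j := fun j hj => pad_append_of_lt hj
  constructor
  · intro h
    refine ⟨(seqLe_of_eqOn_of_eq_bot (fun j hj => (hagree j hj).symm)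
      (fun j hj => pad_of_le hj)).trans h, fun hpre => ?_⟩
    rw [← shift_iterate_pad_append a u, seqLe_shift_iterate_iff]
    · exact h
    · exact fun j hj => (hagree j hj).trans (eq_prefixWord_iff.1 hpre j hj)
  · rintro ⟨ha, hu⟩
    by_cases hpre : a = prefixWord y a.length
    · rw [← seqLe_shift_iterate_iff (r := a.length), shift_iterate_pad_append]
      · exact hu hpre
      · exact fun j hj => (hagree j hj).trans (eq_prefixWord_iff.1 hpre j hj)
    · obtain ⟨i, hia, hi, hlt⟩ := exists_lt_of_seqLe_of_ne_prefixWord ha hpre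
      exact Or.inr ⟨i, fun j hj => (hagree j (by omega)).trans (hi j hj),
        (hagree i hia).symm ▸ hlt⟩

theorem seqLe_pad_prefixWord_of_seqLe {a : List A} {y : ℕ → A} (h : SeqLe (pad a) y) :
    SeqLe (pad a) (pad (prefixWord y a.length)) := by
  by_cases hpre : a = prefixWord y a.length
  · rw [← hpre]
    exact Or.inl rfl
  · obtain ⟨i, hia, hi, hlt⟩ := exists_lt_of_seqLe_of_ne_prefixWord h hpre
    refine Or.inr ⟨i, fun j hj => ?_, ?_⟩ <;> rw [pad_prefixWord_of_lt y (by omega)]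
    exacts [hi j hj, hlt]

end Pad

section Language

variable {m : ℕ} {d : ℕ → Fin m}

theorem shift_iterate_mem_xSet (hd : Admissible d) (k : ℕ) : shift^[k] d ∈ XSet d := fun i => by
  rw [← Function.iterate_add_apply]
  exact hd.1 (i + k)

theorem prefixWord_mem_lang {x : ℕ → Fin m} (hx : x ∈ XSet d) (k : ℕ) :
    prefixWord x k ∈ Lang d :=
  ⟨x, hx, occurs_iff_exists_prefixWord.2 ⟨0, by simp⟩⟩

theorem prefixWord_mem_lang_self (hd : Admissible d) (k : ℕ) : prefixWord d k ∈ Lang d :=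
  prefixWord_mem_lang (shift_iterate_mem_xSet hd 0) k

theorem mem_lang_of_infix {w t : List (Fin m)} (hw : w ∈ Lang d) (ht : t <:+: w) : t ∈ Lang d :=
  let ⟨x, hx, hocc⟩ := hw
  ⟨x, hx, hocc.of_infix ht⟩

theorem shift_iterate_seqLe_of_suffix_prefixWord (hd : Admissible d) {r c : ℕ}
    (h : prefixWord d r <:+ prefixWord d c) : SeqLe (shift^[c] d) (shift^[r] d) := by
  have hrc : r ≤ c := by simpa using h.length_le
  have hocc := prefixWord_shift_iterate_of_suffix h
  simp only [length_prefixWord] at hocc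
  have hagree : ∀ j < r, shift^[c - r] d j = d j := fun j hj => by
    simpa [hj] using congrArg (·[j]?) hocc
  have h := (seqLe_shift_iterate_iff hagree).2 (hd.1 (c - r))
  rwa [← Function.iterate_add_apply, Nat.add_sub_cancel' hrc] at h

theorem prefixWord_classIndex_suffix (v : List (Fin m)) :
    prefixWord d (classIndex d v.length v) <:+ v :=
  Nat.findGreatest_spec (P := fun k => prefixWord d k <:+ v) (Nat.zero_le _) (by simp [prefixWord])

theorem le_classIndex {v : List (Fin m)} {k : ℕ} (h : prefixWord d k <:+ v) :
    k ≤ classIndex d v.length v :=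
  Nat.le_findGreatest (by simpa using h.length_le) h

theorem classIndex_prefixWord (k : ℕ) :
    classIndex d (prefixWord d k).length (prefixWord d k) = k :=
  le_antisymm ((Nat.findGreatest_le _).trans_eq (length_prefixWord d k))
    (le_classIndex List.suffix_rfl)

theorem classIndex_append_of_le {s w : List (Fin m)}
    (h : classIndex d (s ++ w).length (s ++ w) ≤ w.length) :
    classIndex d (s ++ w).length (s ++ w) = classIndex d w.length w := by
  refine le_antisymm (le_classIndex ?_) (le_classIndex ?_)
  · exact List.suffix_of_suffix_length_le (prefixWord_classIndex_suffix _)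
      (List.suffix_append s w) (by simpa using h)
  · exact (prefixWord_classIndex_suffix w).trans (List.suffix_append s w)

variable [NeZero m]

theorem seqLe_pad_of_mem_lang {w : List (Fin m)} (hw : w ∈ Lang d) : SeqLe (pad w) d := by
  obtain ⟨x, hx, hocc⟩ := hw
  obtain ⟨i, hi⟩ := occurs_iff_exists_prefixWord.1 hocc
  rw [← hi]
  exact (seqLe_pad_prefixWord _ _).trans (hx i)

theorem mem_lang_iff_forall_suffix {w : List (Fin m)} :
    w ∈ Lang d ↔ ∀ t, t <:+ w → SeqLe (pad t) d := by
  refine ⟨fun hw t ht => seqLe_pad_of_mem_lang (mem_lang_of_infix hw ht.isInfix), fun h => ?_⟩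
  refine ⟨pad w, fun i => ?_, occurs_iff_exists_prefixWord.2 ⟨0, ?_⟩⟩
  · rw [shift_iterate_pad]
    exact h _ (List.drop_suffix i w)
  · exact ((eq_prefixWord_iff (y := pad w)).2 fun _ _ => rfl).symm

theorem append_mem_lang_iff_forall (v u : List (Fin m)) :
    v ++ u ∈ Lang d ↔ v ∈ Lang d ∧ u ∈ Lang d ∧
      ∀ r, prefixWord d r <:+ v → SeqLe (pad u) (shift^[r] d) := by
  constructor
  · intro h
    refine ⟨mem_lang_of_infix h (List.prefix_append v u).isInfix,
      mem_lang_of_infix h (List.suffix_append v u).isInfix, fun r hr => ?_⟩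
    have hsuf : prefixWord d r ++ u <:+ v ++ u := by
      obtain ⟨z, rfl⟩ := hr
      exact ⟨z, by simp⟩
    have := (pad_append_seqLe_iff _ _ _).1 (seqLe_pad_of_mem_lang (mem_lang_of_infix h hsuf.isInfix))
    simpa using this.2 (by simp)
  · rintro ⟨hv, hu, hr⟩
    refine mem_lang_iff_forall_suffix.2 fun t ⟨s, hs⟩ => ?_
    rcases List.append_eq_append_iff.1 hs with ⟨a, rfl, rfl⟩ | ⟨b, -, rfl⟩
    · refine (pad_append_seqLe_iff a u d).2 ⟨seqLe_pad_of_mem_lang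
        (mem_lang_of_infix hv (List.suffix_append s a).isInfix), fun hpre => ?_⟩
      exact hr _ (hpre ▸ List.suffix_append s a)
    · exact seqLe_pad_of_mem_lang (mem_lang_of_infix hu (List.suffix_append b t).isInfix)

theorem append_mem_lang_iff (hd : Admissible d) (v u : List (Fin m)) :
    v ++ u ∈ Lang d ↔ v ∈ Lang d ∧ u ∈ Lang d ∧
      SeqLe (pad u) (shift^[classIndex d v.length v] d) := by
  rw [append_mem_lang_iff_forall]
  refine and_congr_right' (and_congr_right' ⟨fun h => h _ (prefixWord_classIndex_suffix v),
    fun h r hr => h.trans (shift_iterate_seqLe_of_suffix_prefixWord hd ?_)⟩)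
  exact List.suffix_of_suffix_length_le hr (prefixWord_classIndex_suffix v)
    (by simpa using le_classIndex hr)

end Language

section Followers

variable {m : ℕ} [NeZero m] {d : ℕ → Fin m}

def classFollowers (d : ℕ → Fin m) (c : ℕ) : Set (List (Fin m)) :=
  {u | u ∈ Lang d ∧ SeqLe (pad u) (shift^[c] d)}

theorem fol_eq_classFollowers (hd : Admissible d) {v : List (Fin m)} (hv : v ∈ Lang d) :
    Fol d v = classFollowers d (classIndex d v.length v) := by
  ext u
  simp [Fol, classFollowers, append_mem_lang_iff hd, hv]

theorem shift_iterate_seqLe_of_classFollowers_subset (hd : Admissible d) {a b : ℕ}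
    (h : classFollowers d a ⊆ classFollowers d b) : SeqLe (shift^[a] d) (shift^[b] d) := by
  rw [seqLe_iff_toLex_le, ← not_lt]
  rintro ⟨i, hagree, hlt⟩
  set w := prefixWord (shift^[a] d) (i + 1)
  have hw : w ∈ classFollowers d b :=
    h ⟨prefixWord_mem_lang (shift_iterate_mem_xSet hd a) _, seqLe_pad_prefixWord _ _⟩
  have hle := Pi.apply_le_of_toLex (seqLe_iff_toLex_le.1 hw.2) (i := i) fun j hj => by
    rw [pad_prefixWord_of_lt _ (by omega)]
    exact (hagree j hj).symm
  rw [pad_prefixWord_of_lt _ (by omega)] at hle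
  exact hle.not_gt hlt

theorem classFollowers_injective (hd : Admissible d) (hnp : ¬ EventuallyPeriodic d) :
    Function.Injective (classFollowers d) := by
  intro a b h
  have heq : shift^[a] d = shift^[b] d :=
    (shift_iterate_seqLe_of_classFollowers_subset hd h.le).antisymm
      (shift_iterate_seqLe_of_classFollowers_subset hd h.ge)
  by_contra hab
  rcases Nat.lt_or_gt_of_ne hab with hab | hab
  · exact hnp (eventuallyPeriodic_of_shift_iterate_eq hab heq)
  · exact hnp (eventuallyPeriodic_of_shift_iterate_eq hab heq.symm)

theorem eq_prefixWord_of_fol_eq (hd : Admissible d) (hnp : ¬ EventuallyPeriodic d)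
    {w : List (Fin m)} (hw : w ∈ Lang d) (h : Fol d (prefixWord d w.length) = Fol d w) :
    w = prefixWord d w.length := by
  rw [fol_eq_classFollowers hd (prefixWord_mem_lang_self hd _),
    fol_eq_classFollowers hd hw, classIndex_prefixWord] at h
  have hsuf := prefixWord_classIndex_suffix (d := d) w
  rw [← classFollowers_injective hd hnp h] at hsuf
  exact (hsuf.eq_of_length (by simp)).symm

end Followers

section Extenders

variable {m : ℕ} {d : ℕ → Fin m}

def IsActive (d : ℕ → Fin m) (w : List (Fin m)) : Prop :=
  ∃ s, s ++ w ∈ Lang d ∧ classIndex d (s ++ w).length (s ++ w) ≠ classIndex d w.length w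

theorem occurs_of_isActive {w : List (Fin m)} (h : IsActive d w) : Occurs w d := by
  obtain ⟨s, -, hne⟩ := h
  have hlt : w.length < classIndex d (s ++ w).length (s ++ w) :=
    lt_of_not_ge fun hle => hne (classIndex_append_of_le hle)
  exact occurs_of_suffix_prefixWord (List.suffix_of_suffix_length_le (List.suffix_append s w)
    (prefixWord_classIndex_suffix _) (by simpa using hlt.le))

variable [NeZero m]

theorem ext_eq_of_not_isActive (hd : Admissible d) {w : List (Fin m)} (h : ¬ IsActive d w) :
    Ext d w = Pred d w ×ˢ Fol d w := by
  ext ⟨s, u⟩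
  change s ++ w ++ u ∈ Lang d ↔ s ++ w ∈ Lang d ∧ w ++ u ∈ Lang d
  rw [append_mem_lang_iff hd (s ++ w), append_mem_lang_iff hd w]
  refine ⟨fun ⟨hsw, hu, hle⟩ => ?_, fun ⟨hsw, _, hu, hle⟩ => ?_⟩ <;>
    have hc := not_not.1 fun hne => h ⟨s, hsw, hne⟩
  · exact ⟨hsw, mem_lang_of_infix hsw (List.suffix_append s w).isInfix, hu, hc ▸ hle⟩
  · exact ⟨hsw, hu, hc ▸ hle⟩

theorem seqLe_pad_of_occurs_of_pred_subset (hd : Admissible d) {w w' : List (Fin m)}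
    (hw : Occurs w d) (hl : w'.length = w.length) (h : Pred d w ⊆ Pred d w') :
    SeqLe (pad w') (pad w) := by
  obtain ⟨i, hi⟩ := occurs_iff_exists_prefixWord.1 hw
  have hpre : prefixWord d i ∈ Pred d w' := h <| by
    change prefixWord d i ++ w ∈ Lang d
    rw [← hi, ← prefixWord_add]
    exact prefixWord_mem_lang_self hd _
  have hle := ((pad_append_seqLe_iff _ _ _).1 (seqLe_pad_of_mem_lang hpre)).2 (by simp)
  rw [length_prefixWord] at hle
  have hle := seqLe_pad_prefixWord_of_seqLe hle
  rwa [hl, hi] at hle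

theorem eq_of_occurs_of_pred_eq (hd : Admissible d) {w w' : List (Fin m)}
    (hw : Occurs w d) (hw' : Occurs w' d) (hl : w.length = w'.length)
    (h : Pred d w = Pred d w') : w = w' :=
  pad_injective_of_length_eq hl <|
    (seqLe_pad_of_occurs_of_pred_subset hd hw' hl h.ge).antisymm
      (seqLe_pad_of_occurs_of_pred_subset hd hw hl.symm h.le)

open Classical in
def extKey (d : ℕ → Fin m) (n : ℕ) (w : List (Fin m)) : Set (List (Fin m)) × Set (List (Fin m)) :=
  (if IsActive d w then Fol d (prefixWord d n) else Fol d w, Pred d w)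

theorem eq_of_isActive_of_extKey_eq (hd : Admissible d) (hnp : ¬ EventuallyPeriodic d)
    {n : ℕ} {w w' : List (Fin m)} (hw' : w' ∈ Lang d) (hl : w.length = n) (hl' : w'.length = n)
    (hA : IsActive d w) (hA' : ¬ IsActive d w') (h : extKey d n w = extKey d n w') : w = w' := by
  simp only [extKey, if_pos hA, if_neg hA', Prod.mk.injEq] at h
  have hpre : w' = prefixWord d w'.length := eq_prefixWord_of_fol_eq hd hnp hw' (hl' ▸ h.1)
  have hocc' : Occurs w' d := occurs_iff_exists_prefixWord.2 ⟨0, hpre.symm⟩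
  exact eq_of_occurs_of_pred_eq hd (occurs_of_isActive hA) hocc' (hl.trans hl'.symm) h.2

theorem ext_eq_of_extKey_eq (hd : Admissible d) (hnp : ¬ EventuallyPeriodic d)
    {n : ℕ} {w w' : List (Fin m)} (hw : w ∈ Lang d) (hw' : w' ∈ Lang d)
    (hl : w.length = n) (hl' : w'.length = n) (h : extKey d n w = extKey d n w') :
    Ext d w = Ext d w' := by
  by_cases hA : IsActive d w <;> by_cases hA' : IsActive d w'
  · simp only [extKey, if_pos hA, if_pos hA', Prod.mk.injEq] at h
    rw [eq_of_occurs_of_pred_eq hd (occurs_of_isActive hA) (occurs_of_isActive hA')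
      (hl.trans hl'.symm) h.2]
  · rw [eq_of_isActive_of_extKey_eq hd hnp hw' hl hl' hA hA' h]
  · rw [eq_of_isActive_of_extKey_eq hd hnp hw hl' hl hA' hA h.symm]
  · simp only [extKey, if_neg hA, if_neg hA', Prod.mk.injEq] at h
    rw [ext_eq_of_not_isActive hd hA, ext_eq_of_not_isActive hd hA', h.1, h.2]

end Extenders

end BetaShift

theorem Set.ncard_image_le_ncard_image_of_eq {α β γ : Type*} {f : α → β} {g : α → γ}
    {s : Set α} (hg : (g '' s).Finite) (h : ∀ a ∈ s, ∀ b ∈ s, g a = g b → f a = f b) :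
    (f '' s).ncard ≤ (g '' s).ncard := by
  rcases s.eq_empty_or_nonempty with rfl | ⟨a₀, -⟩
  · simp
  have : Nonempty α := ⟨a₀⟩
  refine (Set.ncard_le_ncard ?_ (hg.image fun c => f (Function.invFunOn g s c))).trans
    (Set.ncard_image_le hg)
  rintro _ ⟨a, ha, rfl⟩
  have hex : ∃ b ∈ s, g b = g a := ⟨a, ha, rfl⟩
  exact ⟨g a, ⟨a, ha, rfl⟩, h _ (Function.invFunOn_mem hex) a ha (Function.invFunOn_eq hex)⟩

open BetaShift

theorem stmt18_general (m : ℕ) (d : ℕ → Fin m) (hd : Admissible d)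
    (hnp : ¬ EventuallyPeriodic d) (n : ℕ) :
    ExtCount d n ≤ FolCount d n * PredCount d n := by
  have : NeZero m := ⟨(d 0).pos.ne'⟩
  set L := {w | w ∈ Lang d ∧ w.length = n}
  have hL : L.Finite := (List.finite_length_eq _ n).subset fun w hw => hw.2
  have image_eq : ∀ {β : Type} (f : List (Fin m) → β),
      {S | ∃ w ∈ Lang d, w.length = n ∧ S = f w} = f '' L := fun f => by
    ext S
    simp [L, eq_comm, and_assoc]
  have key_mem : ∀ w ∈ L, extKey d n w ∈ (Fol d '' L) ×ˢ (Pred d '' L) := by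
    rintro w ⟨hw, rfl⟩
    refine ⟨?_, w, ⟨hw, rfl⟩, rfl⟩
    by_cases hA : IsActive d w
    · exact ⟨_, ⟨prefixWord_mem_lang_self hd _, by simp⟩, (if_pos hA).symm⟩
    · exact ⟨w, ⟨hw, rfl⟩, (if_neg hA).symm⟩
  calc ExtCount d n = (Ext d '' L).ncard := by rw [ExtCount, image_eq]
    _ ≤ (extKey d n '' L).ncard :=
        Set.ncard_image_le_ncard_image_of_eq (hL.image _) fun _ ⟨hw, hl⟩ _ ⟨hw', hl'⟩ =>
          ext_eq_of_extKey_eq hd hnp hw hw' hl hl'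
    _ ≤ ((Fol d '' L) ×ˢ (Pred d '' L)).ncard :=
        Set.ncard_le_ncard (Set.image_subset_iff.2 key_mem) ((hL.image _).prod (hL.image _))
    _ = FolCount d n * PredCount d n := by
        rw [Set.ncard_prod, FolCount, PredCount, image_eq, image_eq]

/-- for non-sofic β-shifts, `|E(n)| ≤ |F(n)| · |P(n)|`. -/
theorem stmt18 (m : ℕ) (hm : 1 ≤ m) (d : ℕ → Fin m) (hd : Admissible d)
    (hnp : ¬ EventuallyPeriodic d) (n : ℕ) (hn : 1 ≤ n) :
    ExtCount d n ≤ FolCount d n * PredCount d n :=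
  stmt18_general m d hd hnp n
end
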